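/- Let d ≥ 2 be an integer and α ∈ (1, 2). There exists a constant C > 0, depending only on d and α, such that for every nonempty bounded open set D ⊂ ℝ^d and all pairwise distinct x, y, z ∈ D, [ g_D(x,z) / min( |x-z|, δ_D(x) ) ] · [ g_D(z,y) / min( |z-y|, δ_D(z) ) ] ≤ C · [ g_D(x,y) / min( |x-y|, δ_D(x) ) ] · ( |x-z|^{-(d+1-α)} + |z-y|^{-(d+1-α)} ), where g_D(u,v) = |u-v|^{-(d-α)} · ( min( 1, δ_D(u) δ_D(v) / |u-v|² ) )^{α/2}. -/

import Mathlib

/-!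
Write `a, b, c` for the distances of `x, y, z` to `Dᶜ` and `r, s, t` for
`|x - y|, |x - z|, |z - y|`.
Since `δ_D` is 1-Lipschitz, `min(1, uv/ρ²)` is comparable, up to a factor 2, to
`(ρ ∧ u)(ρ ∧ v)/ρ²`, so `g_D` may be replaced by the kernel built from these minima.
After this replacement both sides are products of powers whose exponents are affine in `α`, and in
logarithms the inequality is the combination, with weights `1 - α/2` and `α - 1`, of the two
polynomial inequalities
`(s ∧ c)(t ∧ b)(r ∧ a) ≤ 64 (r ∧ b)(s ∧ a)(t ∧ c)` and
`r (s ∧ c)(t ∧ b) ≤ 4 s t (r ∧ b)`.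
These follow from `ρ ∧ u ≍ ρu/(ρ + u)` and the Lipschitz bounds. The leftover factor
`(r/(st))^(d+1-α)` is at most `2^(d+1-α) (s^-(d+1-α) + t^-(d+1-α))` because `r ≤ 2 max(s, t)`.
-/

open MeasureTheory Metric Set Filter

/-- `g_D(x,y) = |x-y|^{-(d-α)} (min(1, δ_D(x)δ_D(y)/|x-y|²))^{α/2}`, comparable to the
Green function of the killed symmetric `α`-stable process in a bounded `C^{1,1}` open set. -/
noncomputable def greenG (d : ℕ) (α : ℝ) (D : Set (EuclideanSpace ℝ (Fin d)))
    (x y : EuclideanSpace ℝ (Fin d)) : ℝ :=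
  (min 1 (Metric.infDist x Dᶜ * Metric.infDist y Dᶜ / dist x y ^ 2)) ^ (α / 2)
    / dist x y ^ ((d : ℝ) - α)

namespace ThreeG

lemma min_le_two_mul_div_add {ρ u : ℝ} (hρ : 0 < ρ) (hu : 0 ≤ u) :
    min ρ u ≤ 2 * (ρ * u / (ρ + u)) := by
  rw [mul_div_assoc', le_div_iff₀ (by positivity)]
  rcases le_total ρ u with h | h
  · rw [min_eq_left h]; nlinarith
  · rw [min_eq_right h]; nlinarith

lemma mul_div_add_le_min {ρ u : ℝ} (hρ : 0 < ρ) (hu : 0 ≤ u) :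
    ρ * u / (ρ + u) ≤ min ρ u := by
  rw [div_le_iff₀ (by positivity)]
  rcases le_total ρ u with h | h
  · rw [min_eq_left h]; nlinarith
  · rw [min_eq_right h]; nlinarith

lemma min_mul_min_mul_min_le {a b c r s t : ℝ} (ha : 0 ≤ a) (hb : 0 ≤ b) (hc : 0 ≤ c)
    (hr : 0 < r) (hs : 0 < s) (ht : 0 < t)
    (hba : b ≤ a + r) (hac : a ≤ c + s) (hcb : c ≤ b + t) :
    min s c * min t b * min r a ≤ 64 * (min r b * min s a * min t c) := by
  have hsum : (r + b) * (s + a) * (t + c) ≤ 8 * ((s + c) * (t + b) * (r + a)) := by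
    calc (r + b) * (s + a) * (t + c) ≤ (2 * (r + a)) * (2 * (s + c)) * (2 * (t + b)) := by
          gcongr <;> linarith
      _ = 8 * ((s + c) * (t + b) * (r + a)) := by ring
  calc min s c * min t b * min r a
      ≤ (2 * (s * c / (s + c))) * (2 * (t * b / (t + b))) * (2 * (r * a / (r + a))) := by
        gcongr
        · exact min_le_two_mul_div_add hs hc
        · exact min_le_two_mul_div_add ht hb
        · exact min_le_two_mul_div_add hr ha
    _ = 8 * (r * b * (s * a) * (t * c)) / ((s + c) * (t + b) * (r + a)) := by
        field_simp; ring
    _ ≤ 64 * (r * b * (s * a) * (t * c)) / ((r + b) * (s + a) * (t + c)) := by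
        rw [div_le_div_iff₀ (by positivity) (by positivity)]
        have hP : 0 ≤ 8 * (r * b * (s * a) * (t * c)) := by positivity
        linarith [mul_le_mul_of_nonneg_left hsum hP]
    _ = 64 * ((r * b / (r + b)) * (s * a / (s + a)) * (t * c / (t + c))) := by
        field_simp
    _ ≤ 64 * (min r b * min s a * min t c) := by
        gcongr
        · exact mul_div_add_le_min hr hb
        · exact mul_div_add_le_min hs ha
        · exact mul_div_add_le_min ht hc

lemma mul_min_mul_min_le {b c r s t : ℝ} (hb : 0 ≤ b) (hc : 0 ≤ c)
    (hr : 0 < r) (hs : 0 < s) (ht : 0 < t) (hrst : r ≤ s + t) (hcb : c ≤ b + t) :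
    r * (min s c * min t b) ≤ 4 * (s * t * min r b) := by
  have hprod : c * (r + b) ≤ (s + c) * (t + b) := by nlinarith
  calc r * (min s c * min t b)
      ≤ r * ((2 * (s * c / (s + c))) * (2 * (t * b / (t + b)))) := by
        gcongr
        · exact min_le_two_mul_div_add hs hc
        · exact min_le_two_mul_div_add ht hb
    _ = 4 * (s * t) * (r * b * c / ((s + c) * (t + b))) := by
        field_simp; ring
    _ ≤ 4 * (s * t) * (r * b / (r + b)) := by
        refine mul_le_mul_of_nonneg_left ?_ (by positivity)
        rw [div_le_div_iff₀ (by positivity) (by positivity)]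
        linarith [mul_le_mul_of_nonneg_left hprod (by positivity : 0 ≤ r * b)]
    _ ≤ 4 * (s * t * min r b) := by
        rw [mul_assoc]
        gcongr
        exact mul_div_add_le_min hr hb

lemma min_one_mul_div_sq {ρ : ℝ} (hρ : 0 < ρ) (w : ℝ) :
    min 1 (w / ρ ^ 2) = min (ρ ^ 2) w / ρ ^ 2 := by
  rw [← min_div_div_right (by positivity), div_self (by positivity)]

lemma min_mul_min_le_min_sq_mul {ρ u v : ℝ} (hρ : 0 ≤ ρ) (hu : 0 ≤ u) (hv : 0 ≤ v) :
    min ρ u * min ρ v ≤ min (ρ ^ 2) (u * v) := by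
  rw [sq]
  exact le_min (mul_le_mul (min_le_left _ _) (min_le_left _ _) (le_min hρ hv) hρ)
    (mul_le_mul (min_le_right _ _) (min_le_right _ _) (le_min hρ hv) hu)

lemma min_sq_mul_le_two_mul_min_mul_min {ρ u v : ℝ} (hu : 0 ≤ u) (hv : 0 ≤ v)
    (huv : |u - v| ≤ ρ) : min (ρ ^ 2) (u * v) ≤ 2 * (min ρ u * min ρ v) := by
  obtain ⟨h₁, h₂⟩ := abs_sub_le_iff.1 huv
  rcases le_total u ρ with h | h <;> rcases le_total v ρ with h' | h'
  · rw [min_eq_right h, min_eq_right h']; nlinarith [min_le_right (ρ ^ 2) (u * v)]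
  · rw [min_eq_right h, min_eq_left h']; nlinarith [min_le_right (ρ ^ 2) (u * v)]
  · rw [min_eq_left h, min_eq_right h']; nlinarith [min_le_right (ρ ^ 2) (u * v)]
  · rw [min_eq_left h, min_eq_left h']; nlinarith [min_le_left (ρ ^ 2) (u * v)]

/-- `greenG d α D x y = greenKernel d α |x - y| δ_D(x) δ_D(y)` by definition. -/
noncomputable def greenKernel (d α ρ u v : ℝ) : ℝ :=
  (min 1 (u * v / ρ ^ 2)) ^ (α / 2) / ρ ^ (d - α)

noncomputable def minKernel (d α ρ u v : ℝ) : ℝ :=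
  (min ρ u * min ρ v / ρ ^ 2) ^ (α / 2) / ρ ^ (d - α)

lemma greenKernel_nonneg {d α ρ u v : ℝ} (hρ : 0 ≤ ρ) (hu : 0 ≤ u) (hv : 0 ≤ v) :
    0 ≤ greenKernel d α ρ u v := by
  unfold greenKernel
  positivity

lemma minKernel_le_greenKernel {d α ρ u v : ℝ} (hρ : 0 < ρ) (hu : 0 ≤ u) (hv : 0 ≤ v)
    (hα : 0 ≤ α) : minKernel d α ρ u v ≤ greenKernel d α ρ u v := by
  unfold minKernel greenKernel
  rw [min_one_mul_div_sq hρ]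
  gcongr
  exact min_mul_min_le_min_sq_mul hρ.le hu hv

lemma greenKernel_le_two_mul_minKernel {d α ρ u v : ℝ} (hρ : 0 < ρ) (hu : 0 ≤ u)
    (hv : 0 ≤ v) (huv : |u - v| ≤ ρ) (hα₀ : 0 ≤ α) (hα₂ : α ≤ 2) :
    greenKernel d α ρ u v ≤ 2 * minKernel d α ρ u v := by
  unfold minKernel greenKernel
  rw [min_one_mul_div_sq hρ, ← mul_div_assoc]
  gcongr
  calc (min (ρ ^ 2) (u * v) / ρ ^ 2) ^ (α / 2)
      ≤ (2 * (min ρ u * min ρ v / ρ ^ 2)) ^ (α / 2) := by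
        rw [← mul_div_assoc]
        gcongr
        exact min_sq_mul_le_two_mul_min_mul_min hu hv huv
    _ = 2 ^ (α / 2) * (min ρ u * min ρ v / ρ ^ 2) ^ (α / 2) :=
        Real.mul_rpow zero_le_two (by positivity)
    _ ≤ 2 * (min ρ u * min ρ v / ρ ^ 2) ^ (α / 2) := by
        gcongr
        exact Real.rpow_le_self_of_one_le one_le_two (by linarith)

lemma minKernel_threeG_le {a b c r s t d α : ℝ} (ha : 0 < a) (hb : 0 < b) (hc : 0 < c)
    (hr : 0 < r) (hs : 0 < s) (ht : 0 < t) (hα₁ : 1 ≤ α) (hα₂ : α ≤ 2)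
    (hba : b ≤ a + r) (hac : a ≤ c + s) (hcb : c ≤ b + t) (hrst : r ≤ s + t) :
    minKernel d α s a c / min s a * (minKernel d α t c b / min t c) ≤
      8 * (minKernel d α r a b / min r a) * (r / (s * t)) ^ (d + 1 - α) := by
  have h₁ := Real.log_le_log (by positivity)
    (min_mul_min_mul_min_le ha.le hb.le hc.le hr hs ht hba hac hcb)
  have h₂ := Real.log_le_log (by positivity) (mul_min_mul_min_le hb.le hc.le hr hs ht hrst hcb)
  rw [show (64 : ℝ) = 2 ^ 6 by norm_num] at h₁
  rw [show (4 : ℝ) = 2 ^ 2 by norm_num] at h₂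
  rw [← Real.log_le_log_iff (by unfold minKernel; positivity) (by unfold minKernel; positivity),
    show (8 : ℝ) = 2 ^ 3 by norm_num]
  unfold minKernel
  simp (disch := positivity) only [Real.log_mul, Real.log_div, Real.log_rpow, Real.log_pow,
    Nat.cast_ofNat] at h₁ h₂ ⊢
  have hlog2 : 0 < Real.log 2 := Real.log_pos one_lt_two
  linarith [mul_le_mul_of_nonneg_left h₁ (by linarith : (0 : ℝ) ≤ 1 - α / 2),
    mul_le_mul_of_nonneg_left h₂ (by linarith : (0 : ℝ) ≤ α - 1),
    mul_nonneg (by linarith : (0 : ℝ) ≤ α - 1) hlog2.le]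

lemma div_mul_rpow_le_two_rpow_mul_rpow_neg_add {r s t e : ℝ} (hr : 0 ≤ r) (hs : 0 < s)
    (ht : 0 < t) (hrst : r ≤ s + t) (he : 0 ≤ e) :
    (r / (s * t)) ^ e ≤ 2 ^ e * (s ^ (-e) + t ^ (-e)) := by
  have hmin : 0 < min s t := lt_min hs ht
  have hharm := min_le_two_mul_div_add hs ht.le
  rw [mul_div_assoc', le_div_iff₀ (by positivity)] at hharm
  calc (r / (s * t)) ^ e ≤ (2 * (min s t)⁻¹) ^ e := by
        gcongr
        rw [div_le_iff₀ (by positivity), mul_assoc, inv_mul_eq_div, ← mul_div_assoc,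
          le_div_iff₀ hmin]
        nlinarith
    _ = 2 ^ e * (min s t) ^ (-e) := by
        rw [Real.mul_rpow zero_le_two (by positivity), Real.inv_rpow hmin.le,
          Real.rpow_neg hmin.le]
    _ ≤ 2 ^ e * (s ^ (-e) + t ^ (-e)) := by
        gcongr
        rcases min_choice s t with h | h <;> rw [h]
        · exact le_add_of_nonneg_right (by positivity)
        · exact le_add_of_nonneg_left (by positivity)

lemma greenKernel_threeG_le {a b c r s t d α : ℝ} (ha : 0 < a) (hb : 0 < b) (hc : 0 < c)
    (hr : 0 < r) (hs : 0 < s) (ht : 0 < t) (hα₁ : 1 ≤ α) (hα₂ : α ≤ 2)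
    (hαd : α ≤ d + 1) (hab : |a - b| ≤ r) (hac : |a - c| ≤ s) (hcb : |c - b| ≤ t)
    (hrst : r ≤ s + t) :
    greenKernel d α s a c / min s a * (greenKernel d α t c b / min t c) ≤
      32 * 2 ^ (d + 1 - α) * (greenKernel d α r a b / min r a)
        * (s ^ (-(d + 1 - α)) + t ^ (-(d + 1 - α))) := by
  have hba : b ≤ a + r := by linarith [(abs_sub_le_iff.1 hab).2]
  have hac' : a ≤ c + s := by linarith [(abs_sub_le_iff.1 hac).1]
  have hcb' : c ≤ b + t := by linarith [(abs_sub_le_iff.1 hcb).1]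
  have hGs := greenKernel_le_two_mul_minKernel (d := d) hs ha.le hc.le hac (by linarith) hα₂
  have hGt := greenKernel_le_two_mul_minKernel (d := d) ht hc.le hb.le hcb (by linarith) hα₂
  have hKr := minKernel_le_greenKernel (d := d) (α := α) hr ha.le hb.le (by linarith)
  have hsum := div_mul_rpow_le_two_rpow_mul_rpow_neg_add (e := d + 1 - α) hr.le hs ht hrst
    (by linarith)
  calc greenKernel d α s a c / min s a * (greenKernel d α t c b / min t c)
      ≤ 2 * minKernel d α s a c / min s a * (2 * minKernel d α t c b / min t c) := by
        gcongr ?_ / _ * (?_ / _)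
        · exact div_nonneg (greenKernel_nonneg ht.le hc.le hb.le) (le_min ht.le hc.le)
        · exact div_nonneg ((greenKernel_nonneg hs.le ha.le hc.le).trans hGs)
            (le_min hs.le ha.le)
    _ = 4 * (minKernel d α s a c / min s a * (minKernel d α t c b / min t c)) := by ring
    _ ≤ 4 * (8 * (minKernel d α r a b / min r a) * (r / (s * t)) ^ (d + 1 - α)) := by
        gcongr 4 * ?_
        exact minKernel_threeG_le ha hb hc hr hs ht hα₁ hα₂ hba hac' hcb' hrst
    _ ≤ 4 * (8 * (greenKernel d α r a b / min r a)
          * (2 ^ (d + 1 - α) * (s ^ (-(d + 1 - α)) + t ^ (-(d + 1 - α))))) := by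
        gcongr 4 * (8 * (?_ / _) * ?_)
        exact mul_nonneg (by norm_num) (div_nonneg (greenKernel_nonneg hr.le ha.le hb.le)
          (le_min hr.le ha.le))
    _ = 32 * 2 ^ (d + 1 - α) * (greenKernel d α r a b / min r a)
          * (s ^ (-(d + 1 - α)) + t ^ (-(d + 1 - α))) := by ring

lemma abs_infDist_sub_infDist_le {E : Type*} [PseudoMetricSpace E] (A : Set E) (x y : E) :
    |infDist x A - infDist y A| ≤ dist x y := by
  simpa [Real.dist_eq] using (lipschitz_infDist_pt A).dist_le_mul x y

lemma infDist_compl_pos {E : Type*} [NormedAddCommGroup E] [NormedSpace ℝ E] [Nontrivial E]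
    {D : Set E} (hD : Bornology.IsBounded D) (hDo : IsOpen D) {x : E} (hx : x ∈ D) :
    0 < infDist x Dᶜ := by
  have hne : Dᶜ.Nonempty :=
    nonempty_compl.2 fun h => NormedSpace.unbounded_univ ℝ E (h ▸ hD)
  exact (hDo.isClosed_compl.notMem_iff_infDist_pos hne).1 (not_not_intro hx)

end ThreeG

open ThreeG

theorem threeG_gradient_estimate
    (d : ℕ) (hd : 2 ≤ d) (α : ℝ) (hα : α ∈ Set.Ioo (1 : ℝ) 2) :
    ∃ C : ℝ, 0 < C ∧
      ∀ (D : Set (EuclideanSpace ℝ (Fin d))),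
        D.Nonempty → Bornology.IsBounded D → IsOpen D →
        ∀ x ∈ D, ∀ y ∈ D, ∀ z ∈ D, x ≠ y → x ≠ z → y ≠ z →
          (greenG d α D x z / min (dist x z) (Metric.infDist x Dᶜ))
              * (greenG d α D z y / min (dist z y) (Metric.infDist z Dᶜ))
            ≤ C * (greenG d α D x y / min (dist x y) (Metric.infDist x Dᶜ))
              * (dist x z ^ (-((d : ℝ) + 1 - α)) + dist z y ^ (-((d : ℝ) + 1 - α))) := by
  refine ⟨32 * 2 ^ ((d : ℝ) + 1 - α), by positivity, ?_⟩
  intro D _ hD hDo x hx y hy z hz hxy hxz hyz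
  have : Nonempty (Fin d) := ⟨⟨0, by omega⟩⟩
  have hd_real : (2 : ℝ) ≤ d := by exact_mod_cast hd
  exact greenKernel_threeG_le (infDist_compl_pos hD hDo hx) (infDist_compl_pos hD hDo hy)
    (infDist_compl_pos hD hDo hz) (dist_pos.2 hxy) (dist_pos.2 hxz) (dist_pos.2 (Ne.symm hyz))
    hα.1.le hα.2.le (by linarith [hα.2]) (abs_infDist_sub_infDist_le _ x y)
    (abs_infDist_sub_infDist_le _ x z) (abs_infDist_sub_infDist_le _ z y) (dist_triangle x z y)
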